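/- arXiv:2306.04816 — 2 statements merged into one kernel-verified Lean document; each statement's English description precedes it below -/
import Mathlib

section
/- Let R be a ring. If 0 → W → X → Y → 0 is a degreewise pure short exact sequence of chain complexes and two of the three complexes are K-flat, then so is the third. -/
/-!
Setup: we work with cochain complexes of modules over a commutative ring,
with the monoidal (total tensor product) structure on complexes.
-/

open CategoryTheory MonoidalCategory Limits HomologicalComplex

noncomputable section

variable (R : Type) [CommRing R]

/-- Tensoring on the right preserves colimits in `ModuleCat R`. -/
instance (Z : ModuleCat R) : PreservesColimits (tensorRight Z) :=
  preservesColimits_of_natIso (F := tensorLeft Z)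
    (NatIso.ofComponents (fun X => β_ Z X) (by intros; simp))

instance : (curriedTensor (ModuleCat R)).Additive where
  map_add := by intros; ext; simp [curriedTensor]

instance (X : ModuleCat R) : ((curriedTensor (ModuleCat R)).obj X).Additive where
  map_add := by intros; simp [curriedTensor]

instance (X₁ X₂ X₃ : GradedObject ℤ (ModuleCat R)) :
    GradedObject.HasGoodTensor₁₂Tensor X₁ X₂ X₃ :=
  fun _ _ => inferInstanceAs (PreservesColimit _ (tensorRight _))

instance (X₁ X₂ X₃ : GradedObject ℤ (ModuleCat R)) :
    GradedObject.HasGoodTensorTensor₂₃ X₁ X₂ X₃ :=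
  fun _ _ => inferInstanceAs (PreservesColimit _ (tensorLeft _))

instance (X₁ X₂ X₃ X₄ : GradedObject ℤ (ModuleCat R)) :
    GradedObject.HasTensor₄ObjExt X₁ X₂ X₃ X₄ :=
  fun _ _ => inferInstanceAs (PreservesColimit _ (tensorLeft _))

instance (X : ModuleCat R) :
    PreservesColimit (Functor.empty.{0} (ModuleCat R)) ((curriedTensor (ModuleCat R)).obj X) :=
  inferInstanceAs (PreservesColimit _ (tensorLeft _))

instance (X : ModuleCat R) :
    PreservesColimit (Functor.empty.{0} (ModuleCat R)) ((curriedTensor (ModuleCat R)).flip.obj X) :=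
  inferInstanceAs (PreservesColimit _ (tensorRight _))

/-- The category of (cochain) complexes of `R`-modules, with its tensor product. -/
abbrev Kx := CochainComplex (ModuleCat R) ℤ

variable {R}

/-- A complex is acyclic (exact) if its homology vanishes in every degree. -/
def IsAcyclic (X : Kx R) : Prop := ∀ n : ℤ, X.ExactAt n

/-- A complex `X` is K-flat if `E ⊗ X` is acyclic for every acyclic complex `E`. -/
def IsKFlat (X : Kx R) : Prop :=
  ∀ E : Kx R, IsAcyclic E → IsAcyclic (E ⊗ X)

/-!
Tensoring with any complex `E` keeps `S` short exact. In degree `n`, `(E ⊗ S).X n` is the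
coproduct of the sequences `E.X p ⊗ S.X q` with `p + q = n`; each of these is short exact, by
right exactness of `E.X p ⊗ -` and purity of `S.f`, and coproducts of modules are exact. The long
exact homology sequence of `E ⊗ S` then shows that acyclicity satisfies two-out-of-three.
-/

namespace CategoryTheory.ShortComplex

lemma ShortExact.map_of_preservesFiniteColimits {C D : Type*} [Category C] [Category D]
    [Abelian C] [Abelian D] {S : ShortComplex C} (hS : S.ShortExact) (F : C ⥤ D)
    [F.PreservesZeroMorphisms] [PreservesFiniteColimits F] (hf : Mono (F.map S.f)) :
    (S.map F).ShortExact where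
  exact := hS.exact.map_of_epi_of_preservesCokernel F hS.epi_g inferInstance
  mono_f := hf
  epi_g := have := hS.epi_g; F.map_epi S.g

variable {J C : Type*} [Category J] [Category C] [Abelian C]

lemma exact_of_exact_evaluation (S : ShortComplex (J ⥤ C))
    (hS : ∀ j, (S.map ((evaluation J C).obj j)).Exact) : S.Exact := by
  rw [exact_iff_isZero_homology]
  exact Functor.isZero _ fun j =>
    ((exact_iff_isZero_homology _).1 (hS j)).of_iso
      (S.mapHomologyIso ((evaluation J C).obj j)).symm

lemma shortExact_of_shortExact_evaluation (S : ShortComplex (J ⥤ C))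
    (hS : ∀ j, (S.map ((evaluation J C).obj j)).ShortExact) : S.ShortExact where
  exact := exact_of_exact_evaluation S fun j => (hS j).exact
  mono_f := have (j : J) : Mono (S.f.app j) := (hS j).mono_f; NatTrans.mono_of_mono_app S.f
  epi_g := have (j : J) : Epi (S.g.app j) := (hS j).epi_g; NatTrans.epi_of_epi_app S.g

end CategoryTheory.ShortComplex

namespace CategoryTheory.Limits

variable {J C : Type*} [Category J] [Category C] [Abelian C]
  [HasColimitsOfShape J C] [HasExactColimitsOfShape J C]

lemma colim.shortExact_mapShortComplex (S : ShortComplex (J ⥤ C)) (hS : S.ShortExact)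
    {c₁ : Cocone S.X₁} (hc₁ : IsColimit c₁) {c₂ : Cocone S.X₂} (hc₂ : IsColimit c₂)
    {c₃ : Cocone S.X₃} (hc₃ : IsColimit c₃)
    (f : c₁.pt ⟶ c₂.pt) (g : c₂.pt ⟶ c₃.pt)
    (hf : ∀ j, c₁.ι.app j ≫ f = S.f.app j ≫ c₂.ι.app j)
    (hg : ∀ j, c₂.ι.app j ≫ g = S.g.app j ≫ c₃.ι.app j) :
    (colim.mapShortComplex S hc₁ c₂ c₃ f g hf hg).ShortExact where
  exact := colim.exact_mapShortComplex hS.exact hc₁ hc₂ hc₃ f g hf hg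
  mono_f := have := hS.mono_f; colim.map_mono' S.f hc₁ hc₂ f hf
  epi_g :=
    have (j : J) : Epi (S.g.app j) := by have := hS.epi_g; infer_instance
    colim.map_epi' S.g c₂ hc₃ g hg

end CategoryTheory.Limits

instance (E : Kx R) : (tensorLeft E).PreservesZeroMorphisms where
  map_zero M N := by
    ext n : 1
    refine HomologicalComplex.mapBifunctor.hom_ext fun i₁ i₂ h => ?_
    erw [HomologicalComplex.ι_mapBifunctorMap]
    simp

/-- The pairs of degrees `(p, q)` with `p + q = n`: the summands of `(E ⊗ M).X n`. -/
abbrev tensorIndex (n : ℤ) : Set (ℤ × ℤ) :=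
  ComplexShape.π (ComplexShape.up ℤ) (ComplexShape.up ℤ) (ComplexShape.up ℤ) ⁻¹' {n}

def tensorSummands (E : Kx R) (S : ShortComplex (Kx R)) (n : ℤ) :
    ShortComplex (Discrete (tensorIndex n) ⥤ ModuleCat R) where
  X₁ := Discrete.functor fun a => E.X a.1.1 ⊗ S.X₁.X a.1.2
  X₂ := Discrete.functor fun a => E.X a.1.1 ⊗ S.X₂.X a.1.2
  X₃ := Discrete.functor fun a => E.X a.1.1 ⊗ S.X₃.X a.1.2
  f := Discrete.natTrans fun a => E.X a.as.1.1 ◁ S.f.f a.as.1.2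
  g := Discrete.natTrans fun a => E.X a.as.1.1 ◁ S.g.f a.as.1.2
  zero := by
    ext ⟨a⟩ : 2
    simp [← MonoidalCategory.whiskerLeft_comp, ← HomologicalComplex.comp_f]

lemma tensorSummands_shortExact (E : Kx R) {S : ShortComplex (Kx R)} (hS : S.ShortExact)
    (hpure : ∀ (n : ℤ) (M : ModuleCat R), Mono (M ◁ S.f.f n)) (n : ℤ) :
    (tensorSummands E S n).ShortExact :=
  ShortComplex.shortExact_of_shortExact_evaluation _ fun ⟨a⟩ =>
    (hS.map_of_exact (HomologicalComplex.eval _ _ a.1.2)).map_of_preservesFiniteColimits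
      (tensorLeft (E.X a.1.1)) (hpure a.1.2 (E.X a.1.1))

def tensorCofan (E M : Kx R) (n : ℤ) :
    Cofan fun a : tensorIndex n => E.X a.1.1 ⊗ M.X a.1.2 :=
  Cofan.mk ((E ⊗ M).X n) fun a => HomologicalComplex.ιTensorObj E M a.1.1 a.1.2 n a.2

def isColimitTensorCofan (E M : Kx R) (n : ℤ) : IsColimit (tensorCofan E M n) :=
  GradedObject.isColimitCofanMapObj _ _ n

lemma tensorCofan_inj_whiskerLeft (E : Kx R) {M N : Kx R} (φ : M ⟶ N) (n : ℤ)
    (a : tensorIndex n) :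
    (tensorCofan E M n).inj a ≫ (E ◁ φ).f n =
      E.X a.1.1 ◁ φ.f a.1.2 ≫ (tensorCofan E N n).inj a := by
  erw [HomologicalComplex.ι_mapBifunctorMap]
  simp [tensorCofan]

lemma shortExact_map_tensorLeft (E : Kx R) {S : ShortComplex (Kx R)} (hS : S.ShortExact)
    (hpure : ∀ (n : ℤ) (M : ModuleCat R), Mono (M ◁ S.f.f n)) :
    (S.map (tensorLeft E)).ShortExact := by
  refine (HomologicalComplex.shortExact_iff_degreewise_shortExact _).2 fun n => ?_
  exact colim.shortExact_mapShortComplex _ (tensorSummands_shortExact E hS hpure n)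
    (isColimitTensorCofan E S.X₁ n) (isColimitTensorCofan E S.X₂ n)
    (isColimitTensorCofan E S.X₃ n) _ _
    (fun ⟨a⟩ => tensorCofan_inj_whiskerLeft E S.f n a)
    (fun ⟨a⟩ => tensorCofan_inj_whiskerLeft E S.g n a)

lemma isAcyclic_iff_isZero_homology (K : Kx R) : IsAcyclic K ↔ ∀ n, IsZero (K.homology n) :=
  forall_congr' fun n => K.exactAt_iff_isZero_homology n

namespace CategoryTheory.ShortComplex.ShortExact

variable {T : ShortComplex (Kx R)}

lemma isAcyclic_X₃ (hT : T.ShortExact) (h₁ : IsAcyclic T.X₁) (h₂ : IsAcyclic T.X₂) :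
    IsAcyclic T.X₃ := by
  rw [isAcyclic_iff_isZero_homology] at *
  exact fun n => (hT.homology_exact₃ n (n + 1) rfl).isZero_X₂
    ((h₂ n).eq_of_src _ _) ((h₁ (n + 1)).eq_of_tgt _ _)

lemma isAcyclic_X₂ (hT : T.ShortExact) (h₁ : IsAcyclic T.X₁) (h₃ : IsAcyclic T.X₃) :
    IsAcyclic T.X₂ := by
  rw [isAcyclic_iff_isZero_homology] at *
  exact fun n => (hT.homology_exact₂ n).isZero_X₂
    ((h₁ n).eq_of_src _ _) ((h₃ n).eq_of_tgt _ _)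

lemma isAcyclic_X₁ (hT : T.ShortExact) (h₂ : IsAcyclic T.X₂) (h₃ : IsAcyclic T.X₃) :
    IsAcyclic T.X₁ := by
  rw [isAcyclic_iff_isZero_homology] at *
  exact fun n => (hT.homology_exact₁ (n - 1) n (by simp)).isZero_X₂
    ((h₃ (n - 1)).eq_of_src _ _) ((h₂ n).eq_of_tgt _ _)

end CategoryTheory.ShortComplex.ShortExact

/-- If `0 → W → X → Y → 0` is a degreewise pure short exact sequence of
complexes of `R`-modules and two of the three complexes are K-flat, then so is the
third. -/
theorem kflat_two_out_of_three
    (S : ShortComplex (Kx R)) (hS : S.ShortExact)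
    (hpure : ∀ (n : ℤ) (M : ModuleCat R), Mono (M ◁ S.f.f n)) :
    (IsKFlat S.X₁ → IsKFlat S.X₂ → IsKFlat S.X₃) ∧
    (IsKFlat S.X₁ → IsKFlat S.X₃ → IsKFlat S.X₂) ∧
    (IsKFlat S.X₂ → IsKFlat S.X₃ → IsKFlat S.X₁) := by
  have hSE (E : Kx R) := shortExact_map_tensorLeft E hS hpure
  exact ⟨fun h₁ h₂ E hE => (hSE E).isAcyclic_X₃ (h₁ E hE) (h₂ E hE),
    fun h₁ h₃ E hE => (hSE E).isAcyclic_X₂ (h₁ E hE) (h₃ E hE),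
    fun h₂ h₃ E hE => (hSE E).isAcyclic_X₁ (h₂ E hE) (h₃ E hE)⟩
end
end

section
/- Let R be a ring and let E be a chain complex of R-modules with pure injective components such that every chain map X → E from a K-flat complex X is null homotopic and Ext^1 along degreewise pure exact sequences from every K-flat complex into E vanishes. Then E is acyclic. -/
/-!
Setup: we work with cochain complexes of modules over a commutative ring,
with the monoidal (total tensor product) structure on complexes.
-/

open CategoryTheory MonoidalCategory Limits HomologicalComplex

noncomputable section

variable (R : Type) [CommRing R]

variable {R}

/-- An `R`-module `I` is pure injective if every map into `I` extends along every
pure monomorphism. -/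
def PureInjective (I : ModuleCat R) : Prop :=
  ∀ ⦃A B : ModuleCat R⦄ (f : A ⟶ B), Mono f → (∀ M : ModuleCat R, Mono (M ◁ f)) →
    ∀ g : A ⟶ I, ∃ h : B ⟶ I, f ≫ h = g

/-! A chain map from the sphere `Sⁿ(R)` (the unit `R` placed in degree `n`) into `E` is the same
as an `n`-cocycle of `E`, and a null homotopy of it exhibits that cocycle as a coboundary. As
`Sⁿ(R)` is a shift of the tensor unit, it is K-flat, so the hypothesis applies to it. -/

lemma IsAcyclic.of_iso {X Y : Kx R} (e : X ≅ Y) (h : IsAcyclic X) : IsAcyclic Y := fun n =>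
  (exactAt_iff_of_quasiIsoAt e.hom n).mp (h n)

lemma IsAcyclic.shift {X : Kx R} (h : IsAcyclic X) (y : ℤ) : IsAcyclic (X⟦y⟧) := fun n => by
  have hX := h (y + n)
  rw [exactAt_iff] at hX ⊢
  exact ShortComplex.exact_of_iso
    ((CochainComplex.shiftShortComplexFunctorIso (ModuleCat R) y n (y + n) rfl).symm.app X) hX

lemma IsKFlat.of_iso {X Y : Kx R} (e : X ≅ Y) (h : IsKFlat X) : IsKFlat Y := fun A hA =>
  (h A hA).of_iso (whiskerLeftIso A e)

lemma isKFlat_tensorUnit_shift (y : ℤ) : IsKFlat ((𝟙_ (Kx R))⟦y⟧) := fun A hA =>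
  ((hA.of_iso (ρ_ A).symm).shift y).of_iso
    (CochainComplex.mapBifunctorShift₂Iso A _ (curriedTensor (ModuleCat R)) y).symm

lemma isKFlat_single_tensorUnit (n : ℤ) :
    IsKFlat ((single (ModuleCat R) (ComplexShape.up ℤ) n).obj (𝟙_ _)) :=
  (isKFlat_tensorUnit_shift (-n)).of_iso
    (((CochainComplex.singleFunctors (ModuleCat R)).shiftIso (-n) n 0 (by simp)).app _)

lemma exactAt_of_forall_homotopy_zero_from_single {ι : Type*} [DecidableEq ι]
    {c : ComplexShape ι} (E : HomologicalComplex (ModuleCat.{0} R) c) (j : ι)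
    (h : ∀ f : (single (ModuleCat R) c j).obj (𝟙_ _) ⟶ E, Nonempty (Homotopy f 0)) :
    E.ExactAt j := by
  rw [E.exactAt_iff' (c.prev j) j (c.next j) rfl rfl, ShortComplex.moduleCat_exact_iff]
  intro x (hx : E.d j (c.next j) x = 0)
  let φ : 𝟙_ (ModuleCat R) ⟶ E.X j := ModuleCat.ofHom (LinearMap.toSpanSingleton R _ x)
  have hφ : ∀ k, c.Rel j k → φ ≫ E.d j k = 0 := by
    rintro k hk
    obtain rfl := c.next_eq' hk
    ext
    exact (congrArg (E.d j _) (LinearMap.toSpanSingleton_apply_one R _ x)).trans hx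
  obtain ⟨H⟩ := h (mkHomFromSingle φ hφ)
  have hφ_eq : φ = (singleObjXSelf c j _).inv ≫ H.hom j (c.prev j) ≫ E.d (c.prev j) j := by
    have hcomm := H.comm j
    simp only [mkHomFromSingle_f, dNext, single_obj_d, zero_comp, AddMonoidHom.mk'_apply, prevD,
      zero_add, zero_f, add_zero] at hcomm
    rw [← hcomm, Iso.inv_hom_id_assoc]
  exact ⟨((singleObjXSelf c j _).inv ≫ H.hom j (c.prev j)) (1 : R),
    (congrArg (fun g : 𝟙_ (ModuleCat R) ⟶ E.X j => g (1 : R)) hφ_eq).symm.trans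
      (LinearMap.toSpanSingleton_apply_one R _ x)⟩

theorem acyclic_of_rightOrthogonal_to_kflat_general (E : Kx R)
    (hnull : ∀ X : Kx R, IsKFlat X → ∀ f : X ⟶ E, Nonempty (Homotopy f 0)) :
    IsAcyclic E := fun n =>
  exactAt_of_forall_homotopy_zero_from_single E n (hnull _ (isKFlat_single_tensorUnit n))

/-- Let `E` be a complex of `R`-modules with pure injective components
such that every chain map from a K-flat complex to `E` is null homotopic, and such
that every degreewise pure short exact sequence `0 → E → B → X → 0` with `X` K-flat
splits (vanishing of `Ext¹` in the degreewise pure exact structure).  Then `E` is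
acyclic. -/
theorem acyclic_of_rightOrthogonal_to_kflat (E : Kx R)
    (hPI : ∀ n : ℤ, PureInjective (E.X n))
    (hnull : ∀ X : Kx R, IsKFlat X → ∀ f : X ⟶ E, Nonempty (Homotopy f 0))
    (hext : ∀ (B X : Kx R) (i : E ⟶ B) (p : B ⟶ X) (w : i ≫ p = 0),
      (ShortComplex.mk i p w).ShortExact →
      (∀ (n : ℤ) (M : ModuleCat R), Mono (M ◁ i.f n)) →
      IsKFlat X → ∃ s : X ⟶ B, s ≫ p = 𝟙 X) :
    IsAcyclic E :=
  acyclic_of_rightOrthogonal_to_kflat_general E hnull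
end
end
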